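/- arXiv:1108.1370 — 3 statements merged into one kernel-verified Lean document; each statement's English description precedes it below -/
import Mathlib

section
/- A continuous function u on a planar domain Ω that satisfies the local median value property cannot attain a strict local minimum at any interior point. -/
open MeasureTheory Set Metric Real Filter Topology

/-- `m` is a median of `u` over the circle `∂B(x,r)` with respect to arclength measure,
parametrized by `θ ↦ x + r e^{iθ}`. -/
def IsCircleMedian (x : ℂ) (r : ℝ) (u : ℂ → ℝ) (m : ℝ) : Prop :=
  volume (Ioc (0:ℝ) (2*π)) / 2 ≤ volume {θ ∈ Ioc (0:ℝ) (2*π) | m ≤ u (circleMap x r θ)} ∧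
  volume (Ioc (0:ℝ) (2*π)) / 2 ≤ volume {θ ∈ Ioc (0:ℝ) (2*π) | u (circleMap x r θ) ≤ m}

/-- `u` has the local median value property on `Ω`. -/
def HasLMVP (Ω : Set ℂ) (u : ℂ → ℝ) : Prop :=
  ∃ R : ℂ → ℝ, ContinuousOn R Ω ∧
    (∀ x ∈ Ω, 0 < R x ∧ R x ≤ Metric.infDist x Ωᶜ) ∧
    (∀ x ∈ Ω, ∀ r : ℝ, 0 < r → r ≤ R x → IsCircleMedian x r u (u x))

theorem not_isCircleMedian_of_forall_lt {x : ℂ} {r : ℝ} {u : ℂ → ℝ} {m : ℝ}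
    (hlt : ∀ θ, m < u (circleMap x r θ)) : ¬ IsCircleMedian x r u m := by
  rintro ⟨-, hle⟩
  have hempty : {θ ∈ Ioc (0:ℝ) (2*π) | u (circleMap x r θ) ≤ m} = ∅ :=
    eq_empty_of_forall_notMem fun θ hθ => (hlt θ).not_ge hθ.2
  have hpos : 0 < volume (Ioc (0:ℝ) (2*π)) / 2 := by
    rw [Real.volume_Ioc]
    exact ENNReal.div_pos (ENNReal.ofReal_pos.mpr (by linarith [pi_pos])).ne' ENNReal.ofNat_ne_top
  rw [hempty, measure_empty] at hle
  exact hpos.not_ge hle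

theorem circleMap_mem_ball_diff_singleton {c : ℂ} {r ρ : ℝ} (hr : 0 < r) (hrρ : r < ρ)
    (θ : ℝ) :
    circleMap c r θ ∈ ball c ρ \ {c} := by
  have hdist : dist (circleMap c r θ) c = r := mem_sphere.mp (circleMap_mem_sphere c hr.le θ)
  refine ⟨mem_ball.mpr (hdist.trans_lt hrρ), fun hc => ?_⟩
  rw [mem_singleton_iff.mp hc, dist_self] at hdist
  exact hr.ne hdist

theorem no_strict_local_min_general (Ω : Set ℂ)
    (u : ℂ → ℝ) (hlmvp : HasLMVP Ω u) :
    ¬ ∃ x₀ ∈ Ω, ∃ ρ > (0:ℝ), ball x₀ ρ ⊆ Ω ∧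
      ∀ x ∈ ball x₀ ρ \ {x₀}, u x₀ < u x := by
  rintro ⟨x₀, hx₀, ρ, hρ, -, hmin⟩
  obtain ⟨R, -, hR, hmed⟩ := hlmvp
  set r := min (R x₀) (ρ / 2)
  have hr : 0 < r := lt_min (hR x₀ hx₀).1 (half_pos hρ)
  have hrρ : r < ρ := (min_le_right _ _).trans_lt (half_lt_self hρ)
  exact not_isCircleMedian_of_forall_lt
    (fun θ => hmin _ (circleMap_mem_ball_diff_singleton hr hrρ θ))
    (hmed x₀ hx₀ r hr (min_le_left _ _))

theorem no_strict_local_min (Ω : Set ℂ) (hΩ : IsOpen Ω) (hconn : IsConnected Ω)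
    (u : ℂ → ℝ) (hu : ContinuousOn u Ω) (hlmvp : HasLMVP Ω u) :
    ¬ ∃ x₀ ∈ Ω, ∃ ρ > (0:ℝ), ball x₀ ρ ⊆ Ω ∧
      ∀ x ∈ ball x₀ ρ \ {x₀}, u x₀ < u x :=
  no_strict_local_min_general Ω u hlmvp
end

section
/- Let Ω ⊂ ℝ² be open and let u : Ω → ℝ be continuous with the local median value property. Then u is a viscosity subsolution of −Δ₁u = 0: whenever x₀ ∈ Ω and φ ∈ C²(Ω) satisfy φ(x₀) = u(x₀), φ(x) > u(x) for x ≠ x₀, and Dφ(x₀) ≠ 0, then −Δ₁φ(x₀) ≤ 0. -/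
/-!
If `D²φ(x₀)[v, v] = -c < 0` for the unit vector `v` orthogonal to `Dφ(x₀)`, Taylor's formula
shows that on the circle of small radius `r` about `x₀`, `φ < φ(x₀)` wherever
`Dφ(x₀)(e^{iθ}) < (c/8) r`: near `±v` the negative curvature wins, elsewhere the linear term does.
Since `θ ↦ Dφ(x₀)(e^{iθ})` is continuous and `π`-antiperiodic, it is `≥ (c/8) r` on a set of
measure strictly less than `π`. So `φ(x₀)` lies strictly above every median of `φ` on the
circle, and as `u < φ` there while `u(x₀) = φ(x₀)`, `u(x₀)` is not a median of `u` on it.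
-/

open MeasureTheory Set Metric Real Filter Topology

/-- On `(T, 2T]` the function `g` is `-g` on `(0, T]` shifted by `T`, so the set in question has
the measure of `{|g| ≥ t} ∩ (0, T]`, which misses a neighbourhood of a zero of `g`. -/
theorem Function.Antiperiodic.volume_setOf_le_lt {g : ℝ → ℝ} {T t : ℝ}
    (hg : Function.Antiperiodic g T) (hcont : Continuous g) (hT : 0 < T) (ht : 0 < t) :
    volume {θ ∈ Ioc 0 (2 * T) | t ≤ g θ} < ENNReal.ofReal T := by
  set A := {θ | t ≤ g θ}
  set B := {θ | g θ ≤ -t}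
  have hA : MeasurableSet A := measurableSet_le measurable_const hcont.measurable
  have hB : MeasurableSet B := measurableSet_le hcont.measurable measurable_const
  have hsplit : {θ ∈ Ioc 0 (2 * T) | t ≤ g θ} = A ∩ Ioc 0 T ∪ A ∩ Ioc T (2 * T) := by
    rw [← inter_union_distrib_left, Ioc_union_Ioc_eq_Ioc hT.le (by linarith), inter_comm]
    rfl
  have hshift : volume (A ∩ Ioc T (2 * T)) = volume (B ∩ Ioc 0 T) := by
    rw [← measure_preimage_add_right volume T]
    congr 1
    ext θ
    simp only [A, B, mem_preimage, mem_inter_iff, mem_ofPred_eq, mem_Ioc, hg θ]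
    constructor <;> rintro ⟨h₁, h₂, h₃⟩ <;> refine ⟨by linarith, by linarith, by linarith⟩
  obtain ⟨θ₀, hθ₀, hgθ₀⟩ : ∃ θ₀ ∈ Icc 0 T, g θ₀ = 0 := by
    have h0 : (0 : ℝ) ∈ uIcc (g 0) (g T) := by
      rw [hg.eq, mem_uIcc]
      rcases le_total (g 0) 0 with h | h
      · exact Or.inl ⟨h, by simpa using h⟩
      · exact Or.inr ⟨by simpa using h, h⟩
    simpa [uIcc_of_le hT.le] using intermediate_value_uIcc hcont.continuousOn h0
  set U := g ⁻¹' Ioo (-t) t ∩ Ioo 0 T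
  have hUopen : IsOpen U := (isOpen_Ioo.preimage hcont).inter isOpen_Ioo
  have hUpos : 0 < volume U := by
    have hθ₀' : θ₀ ∈ closure (Ioo 0 T) := by rwa [closure_Ioo hT.ne]
    exact hUopen.measure_pos volume
      (mem_closure_iff.1 hθ₀' _ (isOpen_Ioo.preimage hcont) (by simp [hgθ₀, ht]))
  calc volume {θ ∈ Ioc 0 (2 * T) | t ≤ g θ}
      = volume (A ∩ Ioc 0 T) + volume (B ∩ Ioc 0 T) := by
        rw [hsplit, measure_union _ (hA.inter measurableSet_Ioc), hshift]
        exact disjoint_left.2 fun θ h₁ h₂ => by linarith [h₁.2.2, h₂.2.1]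
    _ = volume ((A ∪ B) ∩ Ioc 0 T) := by
        rw [union_inter_distrib_right, measure_union _ (hB.inter measurableSet_Ioc)]
        exact disjoint_left.2 fun θ h₁ h₂ => by linarith [h₁.1.out, h₂.1.out]
    _ ≤ volume (Ioc 0 T \ U) := by
        refine measure_mono fun θ ⟨hAB, hθ⟩ => ⟨hθ, fun hU => ?_⟩
        rcases hAB with h | h <;> linarith [h.out, hU.1.1, hU.1.2]
    _ = volume (Ioc 0 T) - volume U := by
        refine measure_sdiff (fun θ hθ => Ioo_subset_Ioc_self hθ.2)
          hUopen.measurableSet.nullMeasurableSet ?_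
        exact ((measure_mono inter_subset_right).trans_lt measure_Ioo_lt_top).ne
    _ < ENNReal.ofReal T := by
        rw [Real.volume_Ioc, sub_zero]
        exact ENNReal.sub_lt_self ENNReal.ofReal_ne_top (by simpa using hT) hUpos.ne'

theorem ContDiff.isLittleO_taylor_two {E F : Type*} [NormedAddCommGroup E] [NormedSpace ℝ E]
    [NormedAddCommGroup F] [NormedSpace ℝ F] [CompleteSpace F] {f : E → F}
    (hf : ContDiff ℝ 2 f) (x : E) :
    (fun y => f (x + y) - f x - fderiv ℝ f x y - (2 : ℝ)⁻¹ • fderiv ℝ (fderiv ℝ f) x y y)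
      =o[𝓝 0] fun y => ‖y‖ ^ 2 := by
  set D := iteratedFDeriv ℝ 2 f
  have hD : Continuous D := hf.continuous_iteratedFDeriv le_rfl
  have hremainder : ∀ y, f (x + y) - f x - fderiv ℝ f x y - (2 : ℝ)⁻¹ • fderiv ℝ (fderiv ℝ f) x y y
      = ∫ t in (0 : ℝ)..1, (1 - t) • (D (x + t • y) - D x) (fun _ => y) := by
    intro y
    have htaylor := map_add_eq_sum_add_integral_iteratedFDeriv (n := 1) (x := x) (y := y)
      fun t _ => hf.contDiffAt
    simp only [sub_apply, smul_sub]
    rw [intervalIntegral.integral_sub ((by fun_prop : Continuous _).intervalIntegrable _ _)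
      ((by fun_prop : Continuous _).intervalIntegrable _ _), intervalIntegral.integral_smul_const]
    have hhalf : ∫ t in (0 : ℝ)..1, (1 - t) = 2⁻¹ := by
      rw [intervalIntegral.integral_sub intervalIntegrable_const
        intervalIntegral.intervalIntegrable_id]
      norm_num
    simp only [htaylor, D, hhalf, Finset.sum_range_succ, Finset.range_one, Finset.sum_singleton,
      Nat.factorial_zero, Nat.factorial_one, Nat.cast_one, inv_one, one_smul, pow_one,
      Nat.reduceAdd, iteratedFDeriv_zero_apply, iteratedFDeriv_one_apply,
      iteratedFDeriv_two_apply]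
    abel
  refine (Asymptotics.isLittleO_iff.2 fun ε hε => ?_).congr_left fun y => (hremainder y).symm
  obtain ⟨δ, hδ, hDδ⟩ := Metric.continuousAt_iff.1 hD.continuousAt ε hε
  filter_upwards [ball_mem_nhds 0 hδ] with y hy
  have hy' : ‖y‖ < δ := by simpa using hy
  calc ‖∫ t in (0 : ℝ)..1, (1 - t) • (D (x + t • y) - D x) (fun _ => y)‖
      ≤ ε * ‖y‖ ^ 2 * |1 - 0| := by
        refine intervalIntegral.norm_integral_le_of_norm_le_const fun t ht => ?_
        rw [uIoc_of_le zero_le_one] at ht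
        have hclose : ‖D (x + t • y) - D x‖ ≤ ε := by
          rw [← dist_eq_norm]
          refine (hDδ ?_).le
          rw [dist_eq_norm, add_sub_cancel_left, norm_smul, Real.norm_of_nonneg ht.1.le]
          nlinarith [norm_nonneg y, ht.2]
        calc ‖(1 - t) • (D (x + t • y) - D x) (fun _ => y)‖
            ≤ 1 * (ε * ‖y‖ ^ 2) := by
              rw [norm_smul, Real.norm_of_nonneg (by linarith [ht.2])]
              gcongr
              · linarith [ht.1]
              · exact (ContinuousMultilinearMap.le_opNorm_mul_pow_of_le _
                  (pi_norm_const_le y)).trans (by gcongr)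
          _ = ε * ‖y‖ ^ 2 := one_mul _
    _ = ε * ‖‖y‖ ^ 2‖ := by simp

namespace Complex

theorem re_div_smul_add_im_div_smul {v : ℂ} (hv : v ≠ 0) (w : ℂ) :
    (w / v).re • v + (w / v).im • (I * v) = w := by
  rw [real_smul, real_smul, ← mul_assoc, ← add_mul, re_add_im, div_mul_cancel₀ w hv]

theorem apply_I_mul_ne_zero {p : ℂ →L[ℝ] ℝ} (hp : p ≠ 0) {v : ℂ} (hv : v ≠ 0) (hpv : p v = 0) :
    p (I * v) ≠ 0 := by
  refine fun hpIv => hp (ContinuousLinearMap.ext fun w => ?_)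
  rw [← re_div_smul_add_im_div_smul hv w, map_add, map_smul, map_smul, hpv, hpIv]
  simp

/-- Writing `w = α v + β (I v)`, both `p w` and `B w w - B v v` are `β` times a bounded
quantity, and `p (I v) ≠ 0`. -/
theorem exists_abs_bilin_diag_sub_le {p : ℂ →L[ℝ] ℝ} (hp : p ≠ 0) {v : ℂ} (hv : ‖v‖ = 1)
    (hpv : p v = 0) (B : ℂ →L[ℝ] ℂ →L[ℝ] ℝ) :
    ∃ L, ∀ w, ‖w‖ = 1 → |B w w - B v v| ≤ L * |p w| := by
  have hv0 : v ≠ 0 := norm_ne_zero_iff.1 (by simp [hv])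
  set v' := I * v
  have ha : p v' ≠ 0 := apply_I_mul_ne_zero hp hv0 hpv
  set S := |B v v| + |B v v'| + |B v' v| + |B v' v'|
  refine ⟨S / |p v'|, fun w hw => ?_⟩
  set α := (w / v).re
  set β := (w / v).im
  have hw' : w = α • v + β • v' := (re_div_smul_add_im_div_smul hv0 w).symm
  have hαβ : α ^ 2 + β ^ 2 = 1 := by
    have h := normSq_eq_norm_sq (w / v)
    rw [norm_div, hw, hv, div_one, normSq_apply] at h
    linear_combination h
  have hpw : p w = β * p v' := by rw [hw', map_add, map_smul, map_smul, hpv]; simp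
  have hBw : B w w - B v v = β * (-β * B v v + α * (B v v' + B v' v) + β * B v' v') := by
    rw [hw']
    simp only [map_add, map_smul, add_apply, smul_apply, smul_eq_mul]
    linear_combination (B v v) * hαβ
  have hα : |α| ≤ 1 := abs_le.2 ⟨by nlinarith, by nlinarith⟩
  have hβ : |β| ≤ 1 := abs_le.2 ⟨by nlinarith, by nlinarith⟩
  have hbound : |-β * B v v + α * (B v v' + B v' v) + β * B v' v'| ≤ S :=
    calc _ ≤ |-β * B v v| + |α * (B v v' + B v' v)| + |β * B v' v'| := abs_add_three _ _ _
      _ ≤ |B v v| + |B v v' + B v' v| + |B v' v'| := by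
        rw [abs_mul, abs_mul, abs_mul, abs_neg]
        gcongr <;> exact mul_le_of_le_one_left (abs_nonneg _) ‹_›
      _ ≤ S := by linarith [abs_add_le (B v v') (B v' v)]
  calc |B w w - B v v| = |β| * |-β * B v v + α * (B v v' + B v' v) + β * B v' v'| := by
        rw [hBw, abs_mul]
    _ ≤ |β| * S := by gcongr
    _ = S / |p v'| * |p w| := by
        rw [hpw, abs_mul]
        field_simp

end Complex

theorem circleMap_eq_add_smul_circleMap_zero_one (x : ℂ) (r θ : ℝ) :
    circleMap x r θ = x + r • circleMap 0 1 θ := by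
  simp [circleMap, Complex.real_smul]

theorem eventually_circleMap_lt_of_fderiv_lt {φ : ℂ → ℝ} (hφ : ContDiff ℝ 2 φ) {x₀ v : ℂ}
    (hD : fderiv ℝ φ x₀ ≠ 0) (hv : ‖v‖ = 1) (hvo : fderiv ℝ φ x₀ v = 0)
    (hneg : fderiv ℝ (fderiv ℝ φ) x₀ v v < 0) :
    ∃ K > 0, ∀ᶠ r in 𝓝[>] 0, ∀ θ, fderiv ℝ φ x₀ (circleMap 0 1 θ) < K * r →
      φ (circleMap x₀ r θ) < φ x₀ := by
  set p := fderiv ℝ φ x₀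
  set B := fderiv ℝ (fderiv ℝ φ) x₀
  set c := -B v v
  have hc : 0 < c := neg_pos.2 hneg
  obtain ⟨L, hL⟩ := Complex.exists_abs_bilin_diag_sub_le hD hv hvo B
  obtain ⟨δ, hδ, htaylor⟩ := Metric.eventually_nhds_iff.1
    (Asymptotics.isLittleO_iff.1 (hφ.isLittleO_taylor_two x₀) (show 0 < c / 8 by positivity))
  have hLr : ∀ᶠ r in 𝓝[>] (0 : ℝ), L * r < 2 := by
    refine Tendsto.eventually_lt_const two_pos (Tendsto.mono_left ?_ nhdsWithin_le_nhds)
    exact (continuous_const_mul L).tendsto' 0 0 (mul_zero L)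
  refine ⟨c / 8, by positivity, ?_⟩
  filter_upwards [Ioo_mem_nhdsGT hδ, hLr] with r ⟨hr, hrδ⟩ hLr θ hq
  set w := circleMap 0 1 θ
  have hw : ‖w‖ = 1 := by simp [w]
  have hrw : ‖r • w‖ = r := by rw [norm_smul, hw, mul_one, Real.norm_of_nonneg hr.le]
  have hT := htaylor (show dist (r • w) 0 < δ by rwa [dist_zero_right, hrw])
  rw [← circleMap_eq_add_smul_circleMap_zero_one, hrw] at hT
  simp only [map_smul, smul_apply, smul_eq_mul, norm_pow, Real.norm_eq_abs, abs_of_pos hr,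
    abs_le] at hT
  replace hT : φ (circleMap x₀ r θ) - φ x₀ - r * p w - 2⁻¹ * (r * (r * B w w)) ≤ c / 8 * r ^ 2 :=
    hT.2
  have hBw : r * (r * B w w) ≤ r * (r * (-c + L * |p w|)) := by
    gcongr
    linarith [(abs_le.1 (hL w hw)).2]
  have hquad : r * p w + 2⁻¹ * (r * (r * B w w)) + c / 8 * r ^ 2 < 0 := by
    rcases le_or_gt 0 (p w) with h | h
    · rw [abs_of_nonneg h] at hBw
      nlinarith [mul_nonneg hr.le h, mul_pos hr hr]
    · rw [abs_of_neg h] at hBw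
      nlinarith [mul_pos hr hr, mul_pos (mul_pos hr (neg_pos.2 h)) (sub_pos.2 hLr)]
  linarith

theorem volume_setOf_le_circleMap_lt_pi {φ : ℂ → ℝ} (hφ : ContDiff ℝ 2 φ) {x₀ v : ℂ}
    (hD : fderiv ℝ φ x₀ ≠ 0) (hv : ‖v‖ = 1) (hvo : fderiv ℝ φ x₀ v = 0)
    (hneg : fderiv ℝ (fderiv ℝ φ) x₀ v v < 0) :
    ∀ᶠ r in 𝓝[>] 0, volume {θ ∈ Ioc 0 (2 * π) | φ x₀ ≤ φ (circleMap x₀ r θ)}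
      < ENNReal.ofReal π := by
  obtain ⟨K, hK, hlt⟩ := eventually_circleMap_lt_of_fderiv_lt hφ hD hv hvo hneg
  set g : ℝ → ℝ := fun θ => fderiv ℝ φ x₀ (circleMap 0 1 θ)
  have hg : Function.Antiperiodic g π := fun θ => by
    simp [g, circleMap, add_mul, Complex.exp_add, Complex.exp_pi_mul_I]
  have hgc : Continuous g := (fderiv ℝ φ x₀).continuous.comp (continuous_circleMap 0 1)
  filter_upwards [hlt, self_mem_nhdsWithin] with r hlt (hr : 0 < r)
  refine (measure_mono ?_).trans_lt (hg.volume_setOf_le_lt hgc pi_pos (mul_pos hK hr))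
  rintro θ ⟨hθ, hle⟩
  exact ⟨hθ, not_lt.1 fun h => (hlt θ h).not_ge hle⟩

theorem lmvp_viscosity_subsolution_general (Ω : Set ℂ)
    (u : ℂ → ℝ) (hlmvp : HasLMVP Ω u)
    (x₀ : ℂ) (hx₀ : x₀ ∈ Ω) (φ : ℂ → ℝ) (hφ : ContDiff ℝ 2 φ)
    (htouch : φ x₀ = u x₀) (habove : ∀ x ∈ Ω, x ≠ x₀ → u x < φ x)
    (hD : fderiv ℝ φ x₀ ≠ 0)
    (v : ℂ) (hv : ‖v‖ = 1) (hvo : fderiv ℝ φ x₀ v = 0) :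
    -(iteratedFDeriv ℝ 2 φ x₀ ![v, v]) ≤ 0 := by
  rw [iteratedFDeriv_two_apply, neg_nonpos]
  by_contra! hneg
  obtain ⟨R, -, hR, hmed⟩ := hlmvp
  obtain ⟨hR₀, hRdist⟩ := hR x₀ hx₀
  obtain ⟨r, hφr, hr, hrR⟩ :=
    ((volume_setOf_le_circleMap_lt_pi hφ hD hv hvo hneg).and (Ioo_mem_nhdsGT hR₀)).exists
  have hcircle : ∀ θ, circleMap x₀ r θ ∈ Ω := fun θ =>
    ball_infDist_compl_subset (sphere_subset_ball (hrR.trans_le hRdist)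
      (circleMap_mem_sphere x₀ hr.le θ))
  refine hφr.not_ge ?_
  calc ENNReal.ofReal π = volume (Ioc (0 : ℝ) (2 * π)) / 2 := by
        rw [Real.volume_Ioc, sub_zero, mul_comm, ENNReal.ofReal_mul pi_pos.le, ENNReal.ofReal_ofNat,
          ENNReal.mul_div_cancel_right two_ne_zero ENNReal.ofNat_ne_top]
    _ ≤ volume {θ ∈ Ioc 0 (2 * π) | u x₀ ≤ u (circleMap x₀ r θ)} := (hmed x₀ hx₀ r hr hrR.le).1
    _ ≤ volume {θ ∈ Ioc 0 (2 * π) | φ x₀ ≤ φ (circleMap x₀ r θ)} := by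
        refine measure_mono fun θ ⟨hθ, huθ⟩ => ⟨hθ, ?_⟩
        exact htouch ▸ huθ.trans (habove _ (hcircle θ) (circleMap_ne_center hr.ne')).le

theorem lmvp_viscosity_subsolution (Ω : Set ℂ) (hΩ : IsOpen Ω)
    (u : ℂ → ℝ) (hu : ContinuousOn u Ω) (hlmvp : HasLMVP Ω u)
    (x₀ : ℂ) (hx₀ : x₀ ∈ Ω) (φ : ℂ → ℝ) (hφ : ContDiff ℝ 2 φ)
    (htouch : φ x₀ = u x₀) (habove : ∀ x ∈ Ω, x ≠ x₀ → u x < φ x)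
    (hD : fderiv ℝ φ x₀ ≠ 0)
    (v : ℂ) (hv : ‖v‖ = 1) (hvo : fderiv ℝ φ x₀ v = 0) :
    -(iteratedFDeriv ℝ 2 φ x₀ ![v, v]) ≤ 0 :=
  lmvp_viscosity_subsolution_general Ω u hlmvp x₀ hx₀ φ hφ htouch habove hD v hv hvo
end

section
/- Let u be a smooth (C¹) function on an open set Ω ⊂ ℝ² satisfying the local median value property, and suppose Du(x₀) ≠ 0 at some x₀ ∈ Ω. Then there exists r > 0 such that the connected component of the level set {x ∈ B(x₀,r) : u(x) = u(x₀)} containing x₀ is a diameter of B(x₀,r), i.e., a straight line segment through x₀. -/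
/-
Rotate coordinates so that the gradient of `u` at `x₀` points along the real axis. Near `x₀` the
level line `{u = u x₀}` is then a graph `re = h (im)` with `h` `1/4`-Lipschitz. Take a point `p`
of this graph and the circle around `p` through the graph point above `im p + d`. The graph cuts
the circle exactly twice, into an arc where `u > u p` and an arc where `u < u p`; the median
property makes both arcs half circles, so the two crossings are antipodal, which says
`h (s + d) + h (s - d) = 2 h s` for `s = im p`. A continuous solution of Jensen's equation is affine, so the
level line is a segment through `x₀`; being convex, it is its own connected component.
-/

open MeasureTheory Set Metric Real Filter Topology

open scoped NNReal

lemma volume_Ioc_zero_two_pi_div_two : volume (Ioc 0 (2 * π)) / 2 = ENNReal.ofReal π := by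
  rw [Real.volume_Ioc, sub_zero, ENNReal.ofReal_mul zero_le_two, ENNReal.ofReal_ofNat,
    mul_comm, ENNReal.mul_div_cancel_right two_ne_zero ENNReal.ofNat_ne_top]

lemma half_le_cos_of_abs_le {ψ : ℝ} (h : |ψ| ≤ π / 3) : 1 / 2 ≤ cos ψ := by
  rw [← cos_pi_div_three, ← cos_abs ψ]
  exact cos_le_cos_of_nonneg_of_le_pi (abs_nonneg ψ) (by linarith [pi_pos]) h

lemma cos_le_neg_half_of_abs_sub_pi_le {ψ : ℝ} (h : |ψ - π| ≤ π / 3) : cos ψ ≤ -(1 / 2) := by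
  have := half_le_cos_of_abs_le h
  rw [cos_sub_pi] at this
  linarith

lemma half_le_sin {ψ : ℝ} (h₁ : π / 3 ≤ ψ) (h₂ : ψ ≤ 2 * π / 3) : 1 / 2 ≤ sin ψ := by
  rw [← cos_sub_pi_div_two]
  exact half_le_cos_of_abs_le (abs_le.2 ⟨by linarith, by linarith⟩)

section CircleGraph

variable {k : ℝ → ℝ}

lemma abs_comp_sin_le (hk : LipschitzOnWith (1 / 4) k (Icc (-1) 1)) (hk0 : k 0 = 0) (ψ : ℝ) :
    |k (sin ψ)| ≤ 1 / 4 := by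
  have := hk.dist_le_mul (sin ψ) ⟨neg_one_le_sin ψ, sin_le_one ψ⟩ 0 (by norm_num)
  rw [hk0, Real.dist_eq, Real.dist_eq, sub_zero, sub_zero] at this
  push_cast at this
  nlinarith [abs_sin_le_one ψ]

lemma comp_sin_lt_cos (hk : LipschitzOnWith (1 / 4) k (Icc (-1) 1)) (hk0 : k 0 = 0) {ψ : ℝ}
    (hψ : |ψ| ≤ π / 3) : k (sin ψ) < cos ψ := by
  linarith [half_le_cos_of_abs_le hψ, (abs_le.1 (abs_comp_sin_le hk hk0 ψ)).2]

lemma cos_lt_comp_sin (hk : LipschitzOnWith (1 / 4) k (Icc (-1) 1)) (hk0 : k 0 = 0) {ψ : ℝ}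
    (hψ : |ψ - π| ≤ π / 3) : cos ψ < k (sin ψ) := by
  linarith [cos_le_neg_half_of_abs_sub_pi_le hψ, (abs_le.1 (abs_comp_sin_le hk hk0 ψ)).1]

/-- Through the sum-to-product formulas, `cos` decreases faster than `k ∘ sin` can vary there. -/
lemma strictAntiOn_cos_sub_comp_sin (hk : LipschitzOnWith (1 / 4) k (Icc (-1) 1)) :
    StrictAntiOn (fun ψ => cos ψ - k (sin ψ)) (Icc (π / 3) (2 * π / 3)) := by
  rintro ψ₁ ⟨h₁, h₁'⟩ ψ₂ ⟨h₂, h₂'⟩ h12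
  have hπ := pi_pos
  have hk12 := hk.dist_le_mul (sin ψ₁) ⟨neg_one_le_sin _, sin_le_one _⟩ (sin ψ₂)
    ⟨neg_one_le_sin _, sin_le_one _⟩
  have hδ : 0 < sin ((ψ₂ - ψ₁) / 2) := sin_pos_of_pos_of_lt_pi (by linarith) (by linarith)
  have hmid := half_le_sin (ψ := (ψ₁ + ψ₂) / 2) (by linarith) (by linarith)
  have hcm := mul_le_mul_of_nonneg_left (abs_cos_le_one ((ψ₁ + ψ₂) / 2)) hδ.le
  have hneg : (ψ₁ - ψ₂) / 2 = -((ψ₂ - ψ₁) / 2) := by ring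
  rw [Real.dist_eq, Real.dist_eq, sin_sub_sin, hneg, sin_neg, abs_mul, abs_mul, abs_neg,
    abs_of_pos hδ] at hk12
  push_cast at hk12
  have hcos := cos_sub_cos ψ₁ ψ₂
  rw [hneg, sin_neg] at hcos
  show cos ψ₂ - k (sin ψ₂) < cos ψ₁ - k (sin ψ₁)
  nlinarith [abs_le.1 hk12]

lemma continuous_comp_sin (hk : LipschitzOnWith (1 / 4) k (Icc (-1) 1)) :
    Continuous fun ψ => k (sin ψ) :=
  hk.continuousOn.comp_continuous continuous_sin fun ψ => ⟨neg_one_le_sin ψ, sin_le_one ψ⟩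

lemma exists_comp_sin_le_cos_iff_le (hk : LipschitzOnWith (1 / 4) k (Icc (-1) 1)) (hk0 : k 0 = 0) :
    ∃ α ∈ Ioo (π / 3) (2 * π / 3), ∀ ψ ∈ Icc (-(π / 3)) (4 * π / 3),
      (k (sin ψ) ≤ cos ψ ↔ ψ ≤ α) ∧ (cos ψ ≤ k (sin ψ) ↔ α ≤ ψ) := by
  have hπ := pi_pos
  set φ := fun ψ => cos ψ - k (sin ψ)
  have hφ : Continuous φ := continuous_cos.sub (continuous_comp_sin hk)
  have hstart : 0 < φ (π / 3) := sub_pos.2 <| comp_sin_lt_cos hk hk0 <| by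
    rw [abs_of_pos (by positivity)]
  have hend : φ (2 * π / 3) < 0 := sub_neg.2 <| cos_lt_comp_sin hk hk0 <| by
    rw [abs_le]; constructor <;> linarith
  obtain ⟨α, hα, hφα⟩ := intermediate_value_Ioo' (by linarith) hφ.continuousOn ⟨hend, hstart⟩
  refine ⟨α, hα, fun ψ ⟨hψ₁, hψ₂⟩ => ?_⟩
  obtain ⟨hα₁, hα₂⟩ := hα
  rcases le_or_gt ψ (π / 3) with hψ | hψ
  · have := comp_sin_lt_cos hk hk0 (abs_le.2 ⟨hψ₁, hψ⟩)
    exact ⟨iff_of_true this.le (by linarith), iff_of_false this.not_ge (by linarith)⟩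
  rcases le_or_gt ψ (2 * π / 3) with hψ' | hψ'
  · have hanti := strictAntiOn_cos_sub_comp_sin hk
    have hψI : ψ ∈ Icc (π / 3) (2 * π / 3) := ⟨hψ.le, hψ'⟩
    have hαI : α ∈ Icc (π / 3) (2 * π / 3) := ⟨hα₁.le, hα₂.le⟩
    have h₁ := hanti.le_iff_ge hαI hψI
    have h₂ := hanti.le_iff_ge hψI hαI
    simp only [φ] at hφα h₁ h₂
    rw [hφα, sub_nonneg] at h₁
    rw [hφα, sub_nonpos] at h₂
    exact ⟨h₁, h₂⟩
  · have := cos_lt_comp_sin hk hk0 (ψ := ψ) (abs_le.2 ⟨by linarith, by linarith⟩)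
    exact ⟨iff_of_false this.not_ge (by linarith), iff_of_true this.le (by linarith)⟩

/-- The same sign change, seen from the antipode: apply the previous lemma to `y ↦ -k (-y)`. -/
lemma exists_cos_le_comp_sin_iff_le (hk : LipschitzOnWith (1 / 4) k (Icc (-1) 1)) (hk0 : k 0 = 0) :
    ∃ β ∈ Ioo (4 * π / 3) (5 * π / 3), ∀ ψ ∈ Icc (2 * π / 3) (7 * π / 3),
      (cos ψ ≤ k (sin ψ) ↔ ψ ≤ β) ∧ (k (sin ψ) ≤ cos ψ ↔ β ≤ ψ) := by
  have hk' : LipschitzOnWith (1 / 4) (fun y => -k (-y)) (Icc (-1) 1) :=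
    LipschitzOnWith.of_dist_le_mul fun x hx y hy => by
      rw [dist_neg_neg, ← dist_neg_neg x y]
      exact hk.dist_le_mul _ ⟨by linarith [hx.2], by linarith [hx.1]⟩ _
        ⟨by linarith [hy.2], by linarith [hy.1]⟩
  obtain ⟨α, ⟨hα₁, hα₂⟩, hα⟩ := exists_comp_sin_le_cos_iff_le hk' (by simp [hk0])
  refine ⟨α + π, ⟨by linarith, by linarith⟩, fun ψ ⟨hψ₁, hψ₂⟩ => ?_⟩
  have := hα (ψ - π) ⟨by linarith, by linarith⟩
  simpa only [sin_sub_pi, cos_sub_pi, neg_neg, neg_le_neg_iff, sub_le_iff_le_add,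
    le_sub_iff_add_le] using this

lemma exists_comp_sin_le_cos_iff_or (hk : LipschitzOnWith (1 / 4) k (Icc (-1) 1)) (hk0 : k 0 = 0) :
    ∃ α ∈ Ioo (π / 3) (2 * π / 3), ∃ β ∈ Ioo (4 * π / 3) (5 * π / 3), ∀ θ ∈ Ioc 0 (2 * π),
      (k (sin θ) ≤ cos θ ↔ θ ≤ α ∨ β ≤ θ) ∧ (cos θ ≤ k (sin θ) ↔ α ≤ θ ∧ θ ≤ β) := by
  have hπ := pi_pos
  obtain ⟨α, ⟨hα₁, hα₂⟩, hα⟩ := exists_comp_sin_le_cos_iff_le hk hk0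
  obtain ⟨β, ⟨hβ₁, hβ₂⟩, hβ⟩ := exists_cos_le_comp_sin_iff_le hk hk0
  refine ⟨α, ⟨hα₁, hα₂⟩, β, ⟨hβ₁, hβ₂⟩, fun θ ⟨hθ₁, hθ₂⟩ => ?_⟩
  rcases le_or_gt θ (4 * π / 3) with hθ | hθ
  · have hβθ : ¬β ≤ θ := by linarith
    rw [(hα θ ⟨by linarith, hθ⟩).1, (hα θ ⟨by linarith, hθ⟩).2]
    exact ⟨by simp [hβθ], by simp only [iff_self_and]; intro; linarith⟩
  · have hθα : ¬θ ≤ α := by linarith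
    rw [(hβ θ ⟨by linarith, by linarith⟩).1, (hβ θ ⟨by linarith, by linarith⟩).2]
    exact ⟨by simp [hθα], by simp only [iff_and_self]; intro; linarith⟩

/-- Geometrically: the graph `x = k y` meets the unit circle in two antipodal points. -/
theorem neg_cos_eq_comp_neg_sin (hk : LipschitzOnWith (1 / 4) k (Icc (-1) 1)) (hk0 : k 0 = 0)
    (hle : ENNReal.ofReal π ≤ volume {θ ∈ Ioc 0 (2 * π) | k (sin θ) ≤ cos θ})
    (hge : ENNReal.ofReal π ≤ volume {θ ∈ Ioc 0 (2 * π) | cos θ ≤ k (sin θ)})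
    {ψ : ℝ} (hψ : ψ ∈ Ioo 0 π) (hzero : k (sin ψ) = cos ψ) : k (-sin ψ) = -cos ψ := by
  have hπ := pi_pos
  obtain ⟨α, ⟨hα₁, hα₂⟩, β, ⟨hβ₁, hβ₂⟩, hsign⟩ := exists_comp_sin_le_cos_iff_or hk hk0
  have hset_le : {θ ∈ Ioc 0 (2 * π) | k (sin θ) ≤ cos θ} ⊆ Ioc 0 α ∪ Icc β (2 * π) := by
    rintro θ ⟨hθ, hkθ⟩
    rcases (hsign θ hθ).1.1 hkθ with h | h
    exacts [.inl ⟨hθ.1, h⟩, .inr ⟨h, hθ.2⟩]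
  have hset_ge : {θ ∈ Ioc 0 (2 * π) | cos θ ≤ k (sin θ)} ⊆ Icc α β :=
    fun θ ⟨hθ, hkθ⟩ => (hsign θ hθ).2.1 hkθ
  have hβα : β = α + π := by
    have h₁ := (hle.trans (measure_mono hset_le)).trans (measure_union_le _ _)
    rw [Real.volume_Ioc, Real.volume_Icc, ← ENNReal.ofReal_add (by linarith) (by linarith),
      ENNReal.ofReal_le_ofReal_iff (by linarith)] at h₁
    have h₂ := hge.trans (measure_mono hset_ge)
    rw [Real.volume_Icc, ENNReal.ofReal_le_ofReal_iff (by linarith)] at h₂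
    linarith
  obtain ⟨hψ₁, hψ₂⟩ := hψ
  have hψI : ψ ∈ Ioc 0 (2 * π) := ⟨hψ₁, by linarith⟩
  have hψα : ψ = α := le_antisymm
    (((hsign ψ hψI).1.1 hzero.le).resolve_right (by linarith)) ((hsign ψ hψI).2.1 hzero.ge).1
  have hβI : β ∈ Ioc 0 (2 * π) := ⟨by linarith, by linarith⟩
  have := le_antisymm ((hsign β hβI).1.2 (.inr le_rfl)) ((hsign β hβI).2.2 ⟨by linarith, le_rfl⟩)
  rwa [hβα, ← hψα, sin_add_pi, cos_add_pi] at this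

end CircleGraph

lemma volume_inter_Ioc_add_of_periodic {E : Set ℝ} {T : ℝ} (hT : 0 < T) (hE : MeasurableSet E)
    (hper : ∀ x, x + T ∈ E ↔ x ∈ E) (t : ℝ) :
    volume (E ∩ Ioc t (t + T)) = volume (E ∩ Ioc 0 T) := by
  have hE_per : Function.Periodic (· ∈ E) T := fun x => propext (hper x)
  have hinv : ∀ g : AddSubgroup.zmultiples T, (fun x => g +ᵥ x) ⁻¹' E = E := by
    rintro ⟨_, k, rfl⟩
    ext x
    simpa [add_comm] using Iff.of_eq (hE_per.zsmul k x)
  have := (isAddFundamentalDomain_Ioc hT t).measure_set_eq (isAddFundamentalDomain_Ioc hT 0) hE hinv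
  rwa [zero_add] at this

lemma circleMap_add_mul_arg {x₀ n : ℂ} (hn : ‖n‖ = 1) (z : ℂ) (r θ : ℝ) :
    circleMap (x₀ + n * z) r (θ + Complex.arg n) = x₀ + n * circleMap z r θ := by
  have hexp : Complex.exp (Complex.arg n * Complex.I) = n := by
    simpa [hn] using Complex.norm_mul_exp_arg_mul_I n
  simp only [circleMap, Complex.ofReal_add, add_mul, Complex.exp_add, hexp]
  ring

lemma volume_setOf_add_mul_circleMap {x₀ n : ℂ} (hn : ‖n‖ = 1) (z : ℂ) (r : ℝ) {P : ℂ → Prop}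
    (hP : MeasurableSet {θ | P (circleMap (x₀ + n * z) r θ)}) :
    volume {θ ∈ Ioc 0 (2 * π) | P (x₀ + n * circleMap z r θ)} =
      volume {θ ∈ Ioc 0 (2 * π) | P (circleMap (x₀ + n * z) r θ)} := by
  set E := {θ | P (circleMap (x₀ + n * z) r θ)}
  have hper : ∀ θ, θ + 2 * π ∈ E ↔ θ ∈ E := fun θ => by
    simp only [E, mem_ofPred_eq, periodic_circleMap _ _ θ]
  have hpre : {θ ∈ Ioc 0 (2 * π) | P (x₀ + n * circleMap z r θ)} =
      (· + Complex.arg n) ⁻¹' (E ∩ Ioc (Complex.arg n) (Complex.arg n + 2 * π)) := by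
    ext θ
    simp only [E, mem_ofPred_eq, mem_preimage, mem_inter_iff, mem_Ioc, circleMap_add_mul_arg hn]
    constructor
    · rintro ⟨⟨h₀, h₁⟩, hP⟩
      exact ⟨hP, by linarith, by linarith⟩
    · rintro ⟨hP, h₀, h₁⟩
      exact ⟨⟨by linarith, by linarith⟩, hP⟩
  rw [hpre, measure_preimage_add_right, volume_inter_Ioc_add_of_periodic two_pi_pos hP hper,
    inter_comm]
  rfl

theorem IsCircleMedian.comp_add_mul {u : ℂ → ℝ} {x₀ n z : ℂ} {r m : ℝ} (hn : ‖n‖ = 1)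
    (hr : 0 ≤ r) (hu : ContinuousOn u (sphere (x₀ + n * z) r))
    (h : IsCircleMedian (x₀ + n * z) r u m) : IsCircleMedian z r (fun z => u (x₀ + n * z)) m := by
  have hcont : Continuous fun θ => u (circleMap (x₀ + n * z) r θ) :=
    hu.comp_continuous (continuous_circleMap _ r) (circleMap_mem_sphere _ hr)
  obtain ⟨hle, hge⟩ := h
  refine ⟨?_, ?_⟩
  · rwa [volume_setOf_add_mul_circleMap hn z r (P := (m ≤ u ·))
      (measurableSet_le measurable_const hcont.measurable)]
  · rwa [volume_setOf_add_mul_circleMap hn z r (P := (u · ≤ m))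
      (measurableSet_le hcont.measurable measurable_const)]

/-- At the largest maximiser `x₁` of `g`, Jensen's equation on `[x₁ - d, x₁ + d]` forces
`g (x₁ + d) = g x₁`, so a positive maximum cannot exist. -/
lemma nonpos_of_midpoint_eq {g : ℝ → ℝ} {p q : ℝ} (hg : ContinuousOn g (Icc p q))
    (hmid : ∀ x ∈ Icc p q, ∀ y ∈ Icc p q, g ((x + y) / 2) = (g x + g y) / 2)
    (hp : g p = 0) (hq : g q = 0) : ∀ x ∈ Icc p q, g x ≤ 0 := by
  by_contra! ⟨z, hz, hgz⟩
  obtain ⟨x₀, hx₀, hmax⟩ := isCompact_Icc.exists_isMaxOn ⟨z, hz⟩ hg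
  rw [isMaxOn_iff] at hmax
  have hS : IsCompact {x ∈ Icc p q | g x = g x₀} :=
    isCompact_Icc.of_isClosed_subset (hg.preimage_isClosed_of_isClosed isClosed_Icc
      isClosed_singleton) fun x hx => hx.1
  obtain ⟨hx₁, hgx₁⟩ : sSup {x ∈ Icc p q | g x = g x₀} ∈ {x ∈ Icc p q | g x = g x₀} :=
    hS.sSup_mem ⟨x₀, hx₀, rfl⟩
  set x₁ := sSup {x ∈ Icc p q | g x = g x₀}
  have hpos : 0 < g x₀ := hgz.trans_le (hmax z hz)
  have hx₁p : p < x₁ := lt_of_le_of_ne hx₁.1 fun h => by rw [← h, hp] at hgx₁; linarith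
  have hx₁q : x₁ < q := lt_of_le_of_ne hx₁.2 fun h => by rw [h, hq] at hgx₁; linarith
  set d := min (q - x₁) (x₁ - p)
  have hd : 0 < d := lt_min (by linarith) (by linarith)
  have hplus : x₁ + d ∈ Icc p q := ⟨by linarith, by linarith [min_le_left (q - x₁) (x₁ - p)]⟩
  have hminus : x₁ - d ∈ Icc p q := ⟨by linarith [min_le_right (q - x₁) (x₁ - p)], by linarith⟩
  have hJ := hmid _ hplus _ hminus
  rw [show (x₁ + d + (x₁ - d)) / 2 = x₁ by ring, hgx₁] at hJ
  have : x₁ + d ≤ x₁ := le_csSup hS.bddAbove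
    ⟨hplus, le_antisymm (hmax _ hplus) (by linarith [hmax _ hminus])⟩
  linarith

lemma eq_mul_of_midpoint_eq {g : ℝ → ℝ} {b : ℝ} (hb : 0 < b) (hg : ContinuousOn g (Icc (-b) b))
    (hmid : ∀ x ∈ Icc (-b) b, ∀ y ∈ Icc (-b) b, g ((x + y) / 2) = (g x + g y) / 2)
    (h0 : g 0 = 0) : ∀ x ∈ Icc (-b) b, g x = g b / b * x := by
  have hbI : b ∈ Icc (-b) b := ⟨by linarith, le_rfl⟩
  have hnbI : -b ∈ Icc (-b) b := ⟨le_rfl, by linarith⟩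
  have hodd : g (-b) = -g b := by
    have := hmid b hbI (-b) hnbI
    rw [show (b + -b) / 2 = 0 by ring, h0] at this
    linarith
  set f := fun x => g x - g b / b * x
  have hf : ContinuousOn f (Icc (-b) b) := hg.sub (continuousOn_const.mul continuousOn_id)
  have hfmid : ∀ x ∈ Icc (-b) b, ∀ y ∈ Icc (-b) b, f ((x + y) / 2) = (f x + f y) / 2 := by
    intro x hx y hy
    simp only [f, hmid x hx y hy]
    ring
  have hfb : f b = 0 := by simp only [f]; field_simp; ring
  have hfnb : f (-b) = 0 := by simp only [f, hodd]; field_simp; ring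
  have hle := nonpos_of_midpoint_eq hf hfmid hfnb hfb
  have hge := nonpos_of_midpoint_eq hf.neg
    (fun x hx y hy => by rw [Pi.neg_apply, Pi.neg_apply, Pi.neg_apply, hfmid x hx y hy]; ring)
    (by simp [hfnb]) (by simp [hfb])
  intro x hx
  have := le_antisymm (hle x hx) (by simpa using hge x hx)
  simp only [f] at this
  linarith

lemma LipschitzOnWith.rescale {f : ℝ → ℝ} {K : ℝ≥0} {s r : ℝ} (hr : 0 < r)
    (hf : LipschitzOnWith K f (Icc (s - r) (s + r))) :
    LipschitzOnWith K (fun y => (f (s + r * y) - f s) / r) (Icc (-1) 1) := by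
  have hmem : ∀ y ∈ Icc (-1 : ℝ) 1, s + r * y ∈ Icc (s - r) (s + r) := fun y ⟨h₁, h₂⟩ =>
    ⟨by nlinarith, by nlinarith⟩
  refine LipschitzOnWith.of_dist_le_mul fun x hx y hy => ?_
  have := hf.dist_le_mul _ (hmem x hx) _ (hmem y hy)
  rw [Real.dist_eq, Real.dist_eq] at this ⊢
  rw [← sub_div, sub_sub_sub_cancel_right, abs_div, abs_of_pos hr, div_le_iff₀ hr]
  calc |f (s + r * x) - f (s + r * y)| ≤ K * |s + r * x - (s + r * y)| := this
    _ = K * |x - y| * r := by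
      rw [show s + r * x - (s + r * y) = r * (x - y) by ring, abs_mul, abs_of_pos hr]; ring

lemma Complex.arg_mem_Ioo_of_im_pos {z : ℂ} (hz : 0 < z.im) : Complex.arg z ∈ Ioo 0 π :=
  ⟨lt_of_le_of_ne (Complex.arg_nonneg_iff.2 hz.le) fun h =>
    hz.ne' (Complex.arg_eq_zero_iff.1 h.symm).2, Complex.arg_lt_pi_iff.2 (.inr hz.ne')⟩

lemma circleMap_eq_mk (c : ℂ) (r θ : ℝ) :
    circleMap c r θ = ⟨c.re + r * cos θ, c.im + r * sin θ⟩ := by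
  apply Complex.ext <;> simp [circleMap, Complex.exp_ofReal_mul_I_re, Complex.exp_ofReal_mul_I_im]

lemma exists_unit_forall_re_eq_mul_im_iff (κ : ℝ) :
    ∃ v : ℂ, ‖v‖ = 1 ∧ ∀ z : ℂ, z.re = κ * z.im ↔ ∃ t : ℝ, z = t • v := by
  set u : ℂ := ⟨κ, 1⟩
  have hu : u ≠ 0 := fun h => one_ne_zero (congrArg Complex.im h)
  refine ⟨(‖u‖⁻¹ : ℝ) • u, norm_smul_inv_norm hu, fun z => ⟨fun hz => ?_, ?_⟩⟩
  · refine ⟨z.im * ‖u‖, ?_⟩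
    rw [smul_smul, mul_assoc, mul_inv_cancel₀ (norm_ne_zero_iff.2 hu), mul_one]
    apply Complex.ext <;> simp [u, hz, mul_comm]
  · rintro ⟨t, rfl⟩
    simp [u]
    ring

/-- The constant `1 / 8` makes the level line of `w` through `0` a `1 / 4`-Lipschitz graph
`re = h (im)`. -/
def IsNearReOn (w : ℂ → ℝ) (c a : ℝ) : Prop :=
  ∀ z ∈ Icc (-a) a ×ℂ Icc (-a) a, ∀ z' ∈ Icc (-a) a ×ℂ Icc (-a) a,
    |w z' - w z - c * (z' - z).re| ≤ c / 8 * (|(z' - z).re| + |(z' - z).im|)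

noncomputable def levelGraph (w : ℂ → ℝ) (a s : ℝ) : ℝ :=
  Function.invFunOn (fun t : ℝ => w ⟨t, s⟩) (Icc (-a) a) (w 0)

namespace IsNearReOn

variable {w : ℂ → ℝ} {c a : ℝ}

lemma strictMonoOn (hw : IsNearReOn w c a) (hc : 0 < c) {s : ℝ} (hs : s ∈ Icc (-a) a) :
    StrictMonoOn (fun t : ℝ => w ⟨t, s⟩) (Icc (-a) a) := by
  intro t ht t' ht' htt
  have := hw ⟨t, s⟩ ⟨ht, hs⟩ ⟨t', s⟩ ⟨ht', hs⟩
  simp only [Complex.sub_re, Complex.sub_im, sub_self, abs_zero, add_zero,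
    abs_of_pos (sub_pos.2 htt)] at this
  have := (abs_le.1 this).1
  show w ⟨t, s⟩ < w ⟨t', s⟩
  nlinarith

lemma continuousOn_line (hw : IsNearReOn w c a) (hc : 0 < c) {s : ℝ} (hs : s ∈ Icc (-a) a) :
    ContinuousOn (fun t : ℝ => w ⟨t, s⟩) (Icc (-a) a) := by
  refine (LipschitzOnWith.of_dist_le_mul (K := (2 * c).toNNReal) fun t ht t' ht' => ?_)
    |>.continuousOn
  have := hw ⟨t', s⟩ ⟨ht', hs⟩ ⟨t, s⟩ ⟨ht, hs⟩
  simp only [Complex.sub_re, Complex.sub_im, sub_self, abs_zero, add_zero] at this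
  rw [Real.dist_eq, Real.dist_eq, Real.coe_toNNReal _ (by positivity)]
  have := (abs_sub_abs_le_abs_sub _ _).trans this
  rw [abs_mul, abs_of_pos hc] at this
  nlinarith [abs_nonneg (t - t')]

lemma exists_level (hw : IsNearReOn w c a) (hc : 0 < c) (ha : 0 < a) {s : ℝ}
    (hs : s ∈ Icc (-a) a) : ∃ t ∈ Icc (-a) a, w ⟨t, s⟩ = w 0 := by
  have h0a : (0 : ℝ) ∈ Icc (-a) a := ⟨by linarith, ha.le⟩
  have h0 : (0 : ℂ) ∈ Icc (-a) a ×ℂ Icc (-a) a := ⟨h0a, h0a⟩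
  have hs' := abs_le.2 hs
  have hright := hw 0 h0 ⟨a, s⟩ ⟨⟨by linarith, le_rfl⟩, hs⟩
  have hleft := hw 0 h0 ⟨-a, s⟩ ⟨⟨le_rfl, by linarith⟩, hs⟩
  simp only [sub_zero, abs_neg, abs_of_pos ha] at hright hleft
  have h₁ := (abs_le.1 hright).1
  have h₂ := (abs_le.1 hleft).2
  exact intermediate_value_Icc (by linarith) (hw.continuousOn_line hc hs)
    ⟨by nlinarith, by nlinarith⟩

lemma levelGraph_mem (hw : IsNearReOn w c a) (hc : 0 < c) (ha : 0 < a) {s : ℝ}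
    (hs : s ∈ Icc (-a) a) : levelGraph w a s ∈ Icc (-a) a :=
  Function.invFunOn_mem (hw.exists_level hc ha hs)

lemma apply_levelGraph (hw : IsNearReOn w c a) (hc : 0 < c) (ha : 0 < a) {s : ℝ}
    (hs : s ∈ Icc (-a) a) : w ⟨levelGraph w a s, s⟩ = w 0 :=
  Function.invFunOn_eq (hw.exists_level hc ha hs)

lemma le_apply_iff (hw : IsNearReOn w c a) (hc : 0 < c) (ha : 0 < a) {s t : ℝ}
    (hs : s ∈ Icc (-a) a) (ht : t ∈ Icc (-a) a) : w 0 ≤ w ⟨t, s⟩ ↔ levelGraph w a s ≤ t := by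
  rw [← hw.apply_levelGraph hc ha hs]
  exact (hw.strictMonoOn hc hs).le_iff_le (hw.levelGraph_mem hc ha hs) ht

lemma apply_le_iff (hw : IsNearReOn w c a) (hc : 0 < c) (ha : 0 < a) {s t : ℝ}
    (hs : s ∈ Icc (-a) a) (ht : t ∈ Icc (-a) a) : w ⟨t, s⟩ ≤ w 0 ↔ t ≤ levelGraph w a s := by
  rw [← hw.apply_levelGraph hc ha hs]
  exact (hw.strictMonoOn hc hs).le_iff_le ht (hw.levelGraph_mem hc ha hs)

lemma apply_eq_iff (hw : IsNearReOn w c a) (hc : 0 < c) (ha : 0 < a) {s t : ℝ}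
    (hs : s ∈ Icc (-a) a) (ht : t ∈ Icc (-a) a) : w ⟨t, s⟩ = w 0 ↔ t = levelGraph w a s := by
  rw [← hw.apply_levelGraph hc ha hs]
  exact (hw.strictMonoOn hc hs).injOn.eq_iff ht (hw.levelGraph_mem hc ha hs)

lemma levelGraph_zero (hw : IsNearReOn w c a) (hc : 0 < c) (ha : 0 < a) :
    levelGraph w a 0 = 0 :=
  ((hw.apply_eq_iff hc ha ⟨by linarith, ha.le⟩ ⟨by linarith, ha.le⟩).1 rfl).symm

lemma lipschitzOnWith_levelGraph (hw : IsNearReOn w c a) (hc : 0 < c) (ha : 0 < a) :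
    LipschitzOnWith (1 / 4) (levelGraph w a) (Icc (-a) a) := by
  refine LipschitzOnWith.of_dist_le_mul fun s hs s' hs' => ?_
  have := hw ⟨levelGraph w a s', s'⟩ ⟨hw.levelGraph_mem hc ha hs', hs'⟩ ⟨levelGraph w a s, s⟩
    ⟨hw.levelGraph_mem hc ha hs, hs⟩
  rw [hw.apply_levelGraph hc ha hs, hw.apply_levelGraph hc ha hs'] at this
  simp only [Complex.sub_re, Complex.sub_im, sub_self, zero_sub, abs_neg, abs_mul,
    abs_of_pos hc] at this
  rw [Real.dist_eq, Real.dist_eq]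
  push_cast
  nlinarith [abs_nonneg (levelGraph w a s - levelGraph w a s'), abs_nonneg (s - s')]

lemma abs_levelGraph_sub_le (hw : IsNearReOn w c a) (hc : 0 < c) (ha : 0 < a) {s s' : ℝ}
    (hs : s ∈ Icc (-a) a) (hs' : s' ∈ Icc (-a) a) :
    |levelGraph w a s - levelGraph w a s'| ≤ |s - s'| / 4 := by
  have := (hw.lipschitzOnWith_levelGraph hc ha).dist_le_mul s hs s' hs'
  rw [Real.dist_eq, Real.dist_eq] at this
  push_cast at this
  linarith

lemma pi_le_volume_of_isCircleMedian (hw : IsNearReOn w c a) (hc : 0 < c) (ha : 0 < a)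
    {s r : ℝ} (hr : 0 < r) (hs : |s| + r ≤ a) (hgs : |levelGraph w a s| + r ≤ a)
    (hmed : IsCircleMedian ⟨levelGraph w a s, s⟩ r w (w 0)) :
    ENNReal.ofReal π ≤ volume {θ ∈ Ioc 0 (2 * π) |
      (levelGraph w a (s + r * sin θ) - levelGraph w a s) / r ≤ cos θ} ∧
    ENNReal.ofReal π ≤ volume {θ ∈ Ioc 0 (2 * π) |
      cos θ ≤ (levelGraph w a (s + r * sin θ) - levelGraph w a s) / r} := by
  have hcirc : ∀ θ, (w 0 ≤ w (circleMap ⟨levelGraph w a s, s⟩ r θ) ↔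
      (levelGraph w a (s + r * sin θ) - levelGraph w a s) / r ≤ cos θ) ∧
      (w (circleMap ⟨levelGraph w a s, s⟩ r θ) ≤ w 0 ↔
      cos θ ≤ (levelGraph w a (s + r * sin θ) - levelGraph w a s) / r) := fun θ => by
    have hsin : |r * sin θ| ≤ r := by
      rw [abs_mul, abs_of_pos hr]; exact mul_le_of_le_one_right hr.le (abs_sin_le_one θ)
    have hcos : |r * cos θ| ≤ r := by
      rw [abs_mul, abs_of_pos hr]; exact mul_le_of_le_one_right hr.le (abs_cos_le_one θ)
    have him : s + r * sin θ ∈ Icc (-a) a := abs_le.1 ((abs_add_le _ _).trans (by linarith))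
    have hre : levelGraph w a s + r * cos θ ∈ Icc (-a) a :=
      abs_le.1 ((abs_add_le _ _).trans (by linarith))
    rw [circleMap_eq_mk, hw.le_apply_iff hc ha him hre, hw.apply_le_iff hc ha him hre,
      div_le_iff₀ hr, le_div_iff₀ hr]
    constructor <;> constructor <;> intro h <;> linarith
  obtain ⟨hle, hge⟩ := hmed
  rw [volume_Ioc_zero_two_pi_div_two] at hle hge
  simp only [fun θ => (hcirc θ).1] at hle
  simp only [fun θ => (hcirc θ).2] at hge
  exact ⟨hle, hge⟩

/-- The median property at the point of the level line above `s`, on the circle through the point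
above `s + d`, makes the point above `s - d` antipodal to it. -/
lemma levelGraph_add_add_levelGraph_sub (hw : IsNearReOn w c a) (hc : 0 < c) (ha : 0 < a)
    {R₀ : ℝ} (hmed : ∀ p ∈ Icc (-a) a ×ℂ Icc (-a) a, ∀ r, 0 < r → r ≤ R₀ →
      IsCircleMedian p r w (w p))
    {s d : ℝ} (hs : |s| ≤ a / 4) (hd : 0 < d) (hda : d ≤ a / 8) (hdR : 2 * d ≤ R₀) :
    levelGraph w a (s + d) + levelGraph w a (s - d) = 2 * levelGraph w a s := by
  set h := levelGraph w a
  have hsa : s ∈ Icc (-a) a := abs_le.1 (by linarith)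
  have hhs : |h s| ≤ |s| / 4 := by
    simpa [h, hw.levelGraph_zero hc ha] using
      hw.abs_levelGraph_sub_le hc ha hsa ⟨by linarith, ha.le⟩
  have hX : |h (s + d) - h s| ≤ d / 4 := by
    have hsd : s + d ∈ Icc (-a) a := ⟨by linarith [(abs_le.1 hs).1], by linarith [(abs_le.1 hs).2]⟩
    simpa [h, abs_of_pos hd] using hw.abs_levelGraph_sub_le hc ha hsd hsa
  -- `r` and `arg ζ` are the polar coordinates of the point above `s + d`, seen from `⟨h s, s⟩`
  set ζ : ℂ := ⟨h (s + d) - h s, d⟩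
  set r := ‖ζ‖
  have hdr : d ≤ r := by
    have := Complex.abs_im_le_norm ζ
    rwa [show ζ.im = d from rfl, abs_of_pos hd] at this
  have hr : 0 < r := hd.trans_le hdr
  have hr2 : r ≤ 2 * d := (Complex.norm_le_abs_re_add_abs_im ζ).trans (by
    simp only [ζ, abs_of_pos hd]; linarith)
  have hsin : r * sin (Complex.arg ζ) = d := by
    rw [Complex.sin_arg, mul_div_cancel₀ _ hr.ne']
  have hcos : r * cos (Complex.arg ζ) = h (s + d) - h s := by
    rw [Complex.cos_arg (norm_pos_iff.1 hr), mul_div_cancel₀ _ hr.ne']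
  set k := fun y => (h (s + r * y) - h s) / r
  have hk : LipschitzOnWith (1 / 4) k (Icc (-1) 1) :=
    LipschitzOnWith.rescale hr ((hw.lipschitzOnWith_levelGraph hc ha).mono fun x hx =>
      ⟨by linarith [hx.1, (abs_le.1 hs).1], by linarith [hx.2, (abs_le.1 hs).2]⟩)
  have hmedp := hmed ⟨h s, s⟩ ⟨hw.levelGraph_mem hc ha hsa, hsa⟩ r hr (by linarith)
  rw [hw.apply_levelGraph hc ha hsa] at hmedp
  obtain ⟨hle, hge⟩ := hw.pi_le_volume_of_isCircleMedian hc ha hr (by linarith) (by linarith) hmedp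
  have := neg_cos_eq_comp_neg_sin hk (by simp [k]) hle hge
    (Complex.arg_mem_Ioo_of_im_pos (z := ζ) hd) (by simp only [k, hsin]; field_simp; linarith)
  simp only [k, mul_neg, hsin] at this
  field_simp at this
  rw [hcos, ← sub_eq_add_neg] at this
  linarith

lemma exists_levelGraph_eq_mul (hw : IsNearReOn w c a) (hc : 0 < c) (ha : 0 < a) {R₀ : ℝ}
    (hR₀ : 0 < R₀) (hmed : ∀ p ∈ Icc (-a) a ×ℂ Icc (-a) a, ∀ r, 0 < r → r ≤ R₀ →
      IsCircleMedian p r w (w p)) :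
    ∃ b > 0, b ≤ a / 8 ∧ ∃ κ : ℝ, ∀ s ∈ Icc (-b) b, levelGraph w a s = κ * s := by
  set b := min (a / 8) (R₀ / 2)
  have hb : 0 < b := lt_min (by positivity) (by positivity)
  have hba : b ≤ a / 8 := min_le_left _ _
  have hbR : b ≤ R₀ / 2 := min_le_right _ _
  have hmid : ∀ x ∈ Icc (-b) b, ∀ y ∈ Icc (-b) b, x < y →
      levelGraph w a ((x + y) / 2) = (levelGraph w a x + levelGraph w a y) / 2 := by
    rintro x ⟨hx₁, hx₂⟩ y ⟨hy₁, hy₂⟩ hxy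
    have := hw.levelGraph_add_add_levelGraph_sub hc ha hmed (s := (x + y) / 2) (d := (y - x) / 2)
      (abs_le.2 ⟨by linarith, by linarith⟩) (by linarith) (by linarith) (by linarith)
    rw [show (x + y) / 2 + (y - x) / 2 = y by ring, show (x + y) / 2 - (y - x) / 2 = x by ring]
      at this
    linarith
  refine ⟨b, hb, hba, _, eq_mul_of_midpoint_eq hb
    ((hw.lipschitzOnWith_levelGraph hc ha).continuousOn.mono
      (Icc_subset_Icc (by linarith) (by linarith))) (fun x hx y hy => ?_)
    (hw.levelGraph_zero hc ha)⟩
  rcases lt_trichotomy x y with hxy | rfl | hxy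
  · exact hmid x hx y hy hxy
  · rw [add_self_div_two, add_self_div_two]
  · rw [add_comm x, add_comm (levelGraph w a x)]
    exact hmid y hy x hx hxy

theorem exists_level_inter_ball_eq (hw : IsNearReOn w c a) (hc : 0 < c) (ha : 0 < a) {R₀ : ℝ}
    (hR₀ : 0 < R₀) (hmed : ∀ p ∈ Icc (-a) a ×ℂ Icc (-a) a, ∀ r, 0 < r → r ≤ R₀ →
      IsCircleMedian p r w (w p)) :
    ∃ b > 0, b ≤ a ∧ ∃ v : ℂ, ‖v‖ = 1 ∧
      {z | w z = w 0} ∩ ball 0 b = {z ∈ ball 0 b | ∃ t : ℝ, z = t • v} := by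
  obtain ⟨b, hb, hba, κ, hκ⟩ := hw.exists_levelGraph_eq_mul hc ha hR₀ hmed
  obtain ⟨v, hv, hline⟩ := exists_unit_forall_re_eq_mul_im_iff κ
  refine ⟨b, hb, by linarith, v, hv, ?_⟩
  ext z
  rw [mem_inter_iff, mem_sep_iff, and_comm]
  refine and_congr_right fun hz => ?_
  rw [mem_ball_zero_iff] at hz
  have hre := abs_le.1 ((Complex.abs_re_le_norm z).trans hz.le)
  have him := abs_le.1 ((Complex.abs_im_le_norm z).trans hz.le)
  rw [← hline, ← hκ z.im him]
  exact hw.apply_eq_iff hc ha ⟨by linarith, by linarith⟩ ⟨by linarith, by linarith⟩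

end IsNearReOn

/-- `n` is the unit gradient of `D`, and `c` the norm of the gradient. -/
lemma ContinuousLinearMap.exists_unit_apply_mul_eq (D : ℂ →L[ℝ] ℝ) (hD : D ≠ 0) :
    ∃ n : ℂ, ‖n‖ = 1 ∧ ∃ c > 0, ∀ z, D (n * z) = c * z.re := by
  set g := (InnerProductSpace.toDual ℝ ℂ).symm D
  have hg : 0 < ‖g‖ := by simpa [g] using hD
  refine ⟨g / ‖g‖, by simp [hg.ne'], ‖g‖, hg, fun z => ?_⟩
  rw [← InnerProductSpace.toDual_symm_apply, Complex.inner, mul_comm (g / _), mul_assoc,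
    div_mul_eq_mul_div, Complex.mul_conj, Complex.normSq_eq_norm_sq]
  push_cast
  rw [pow_two, mul_div_cancel_right₀ _ (by exact_mod_cast hg.ne'), mul_comm]
  simp

theorem HasStrictFDerivAt.exists_isNearReOn {u : ℂ → ℝ} {D : ℂ →L[ℝ] ℝ} {x₀ : ℂ}
    (hu : HasStrictFDerivAt u D x₀) (hD : D ≠ 0) :
    ∃ n : ℂ, ‖n‖ = 1 ∧ ∃ c > 0, ∀ᶠ a in 𝓝 0, IsNearReOn (fun z => u (x₀ + n * z)) c a := by
  obtain ⟨n, hn, c, hc, hDn⟩ := D.exists_unit_apply_mul_eq hD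
  obtain ⟨δ, hδ, hnear⟩ :=
    Metric.eventually_nhds_iff.1 (hu.isLittleO.def (by positivity : 0 < c / 8))
  refine ⟨n, hn, c, hc, (gt_mem_nhds (by positivity : 0 < δ / 2)).mono fun a ha z hz z' hz' => ?_⟩
  have hnorm : ∀ y ∈ Icc (-a) a ×ℂ Icc (-a) a, ‖n * y‖ < δ := fun y ⟨hre, him⟩ => by
    rw [norm_mul, hn, one_mul]
    exact (Complex.norm_le_abs_re_add_abs_im y).trans_lt (by
      linarith [abs_le.2 hre, abs_le.2 him])
  have := hnear (y := (x₀ + n * z', x₀ + n * z)) (by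
    rw [Prod.dist_eq, max_lt_iff, dist_eq_norm, dist_eq_norm, add_sub_cancel_left,
      add_sub_cancel_left]
    exact ⟨hnorm z' hz', hnorm z hz⟩)
  simp only [add_sub_add_left_eq_sub, ← mul_sub, hDn, Real.norm_eq_abs, norm_mul, hn,
    one_mul] at this
  exact this.trans (mul_le_mul_of_nonneg_left (Complex.norm_le_abs_re_add_abs_im _)
    (by positivity))

lemma convex_setOf_exists_eq_add_smul {E : Type*} [AddCommGroup E] [Module ℝ E] (x₀ v : E) :
    Convex ℝ {x | ∃ t : ℝ, x = x₀ + t • v} := by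
  rintro _ ⟨t₁, rfl⟩ _ ⟨t₂, rfl⟩ α β - - hαβ
  refine ⟨α * t₁ + β * t₂, ?_⟩
  rw [show α • (x₀ + t₁ • v) + β • (x₀ + t₂ • v) = (α + β) • x₀ + (α * t₁ + β * t₂) • v by
    module, hαβ, one_smul]

lemma inter_ball_eq_of_comp_add_mul {u : ℂ → ℝ} {x₀ n v : ℂ} {b : ℝ} (hn : ‖n‖ = 1)
    (h : {z | u (x₀ + n * z) = u x₀} ∩ ball 0 b = {z ∈ ball 0 b | ∃ t : ℝ, z = t • v}) :
    {x | u x = u x₀} ∩ ball x₀ b = {x ∈ ball x₀ b | ∃ t : ℝ, x = x₀ + t • (n * v)} := by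
  have hn0 : n ≠ 0 := norm_ne_zero_iff.1 (by rw [hn]; exact one_ne_zero)
  ext x
  obtain ⟨z, rfl⟩ : ∃ z, x = x₀ + n * z := ⟨(x - x₀) / n, by field_simp; ring⟩
  have hball : x₀ + n * z ∈ ball x₀ b ↔ z ∈ ball 0 b := by
    rw [mem_ball, mem_ball_zero_iff, dist_eq_norm, add_sub_cancel_left, norm_mul, hn, one_mul]
  have hline : (∃ t : ℝ, x₀ + n * z = x₀ + t • (n * v)) ↔ ∃ t : ℝ, z = t • v := by
    simp only [add_right_inj, ← mul_smul_comm, mul_right_inj' hn0]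
  simpa only [mem_inter_iff, mem_sep_iff, mem_ofPred_eq, hball, hline] using Set.ext_iff.1 h z

lemma HasLMVP.exists_isCircleMedian_comp_add_mul {Ω : Set ℂ} {u : ℂ → ℝ} (h : HasLMVP Ω u)
    (hu : ContinuousOn u Ω) {x₀ n : ℂ} (hn : ‖n‖ = 1) {a : ℝ} (ha : 0 < a)
    (hΩa : closedBall x₀ (3 * a) ⊆ Ω) :
    ∃ R₀ > 0, ∀ p ∈ Icc (-a) a ×ℂ Icc (-a) a, ∀ r, 0 < r → r ≤ R₀ →
      IsCircleMedian p r (fun z => u (x₀ + n * z)) (u (x₀ + n * p)) := by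
  obtain ⟨R, hRcont, hRpos, hmed⟩ := h
  have hK : closedBall x₀ (2 * a) ⊆ Ω := (closedBall_subset_closedBall (by linarith)).trans hΩa
  obtain ⟨R₁, hR₁, hR₁R⟩ := (isCompact_closedBall x₀ (2 * a)).exists_forall_le' (hRcont.mono hK)
    fun p hp => (hRpos p (hK hp)).1
  refine ⟨min R₁ a, lt_min hR₁ ha, fun p ⟨hre, him⟩ r hr hrR => ?_⟩
  have hp : x₀ + n * p ∈ closedBall x₀ (2 * a) := by
    rw [mem_closedBall, dist_eq_norm, add_sub_cancel_left, norm_mul, hn, one_mul]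
    exact (Complex.norm_le_abs_re_add_abs_im p).trans (by linarith [abs_le.2 hre, abs_le.2 him])
  refine (hmed _ (hK hp) r hr ((hrR.trans (min_le_left _ _)).trans (hR₁R _ hp))).comp_add_mul
    hn hr.le (hu.mono (sphere_subset_closedBall.trans (hΩa.trans' ?_)))
  exact closedBall_subset_closedBall' (by linarith [mem_closedBall.1 hp, min_le_right R₁ a])

theorem level_component_is_diameter (Ω : Set ℂ) (hΩ : IsOpen Ω)
    (u : ℂ → ℝ) (hu : ContDiffOn ℝ 1 u Ω) (hlmvp : HasLMVP Ω u)
    (x₀ : ℂ) (hx₀ : x₀ ∈ Ω) (hD : fderiv ℝ u x₀ ≠ 0) :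
    ∃ r > (0:ℝ), ball x₀ r ⊆ Ω ∧ ∃ v : ℂ, ‖v‖ = 1 ∧
      connectedComponentIn ({x : ℂ | u x = u x₀} ∩ ball x₀ r) x₀ =
        {x ∈ ball x₀ r | ∃ t : ℝ, x = x₀ + t • v} := by
  obtain ⟨n, hn, c, hc, hnear⟩ :=
    ((hu.contDiffAt (hΩ.mem_nhds hx₀)).hasStrictFDerivAt one_ne_zero).exists_isNearReOn hD
  obtain ⟨ε, hε, hεΩ⟩ := Metric.isOpen_iff.1 hΩ x₀ hx₀
  obtain ⟨a, ha, hw, haε⟩ := (hnear.and (gt_mem_nhds (by positivity : 0 < ε / 3))).exists_gt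
  have hΩa : closedBall x₀ (3 * a) ⊆ Ω := (closedBall_subset_ball (by linarith)).trans hεΩ
  obtain ⟨R₀, hR₀, hmed⟩ := hlmvp.exists_isCircleMedian_comp_add_mul hu.continuousOn hn ha hΩa
  obtain ⟨b, hb, hba, v, hv, hset⟩ := hw.exists_level_inter_ball_eq hc ha hR₀ hmed
  simp only [mul_zero, add_zero] at hset
  refine ⟨b, hb, ball_subset_closedBall.trans ((closedBall_subset_closedBall (by linarith)).trans
    hΩa), n * v, by rw [norm_mul, hn, hv, one_mul], ?_⟩
  rw [inter_ball_eq_of_comp_add_mul hn hset]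
  exact ((convex_ball x₀ b).inter (convex_setOf_exists_eq_add_smul x₀ (n * v))).isPreconnected
    |>.connectedComponentIn ⟨mem_ball_self hb, 0, by simp⟩
end
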